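/- arXiv:2110.14393 — 4 statements merged into one kernel-verified Lean document; each statement's English description precedes it below -/
import Mathlib

section
/- Let Q : (0, ∞) → ℝ be continuous and satisfy (6 − 10^{−20})/t² > 3 Q(t)² for all t > 0. Let λ ∈ [0, 1] and l ≥ 2 be an integer. Then the only solution f : (0, ∞) → ℝ of the equation −(f'' + (2/t) f') + (1 − λ) f + (l(l+1)/t² − 3Q(t)²) f = 0 that lies in L²((0,∞), t² dt) and is bounded near t = 0 is f ≡ 0. -/
/-!
With `u(t) = t f(t)` the equation becomes `u'' = V u` with
`V = 1 - λ + l(l+1)/t² - 3Q²`, and `V ≥ 0` because `l(l+1) ≥ 6`. Hence `w = u u'` is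
nondecreasing, since `w' = u'² + V u² ≥ 0`. If `w(t₀) > 0` at some point, then `u²` is
nondecreasing beyond `t₀` and bounded below by `u(t₀)² > 0` there, contradicting
`u ∈ L²(dt)`. So `w ≤ 0`, i.e. `u²` is nonincreasing, and boundedness of `f` at the origin
gives `u(0⁺) = 0`, whence `u ≡ 0`.
-/

open Set Filter Topology MeasureTheory

lemma monotoneOn_of_hasDerivAt_nonneg {D : Set ℝ} (hD : Convex ℝ D) {g g' : ℝ → ℝ}
    (hg : ∀ x ∈ D, HasDerivAt g (g' x) x) (hg' : ∀ x ∈ D, 0 ≤ g' x) : MonotoneOn g D :=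
  monotoneOn_of_hasDerivWithinAt_nonneg hD
    (fun x hx => (hg x hx).continuousAt.continuousWithinAt)
    (fun x hx => (hg x (interior_subset hx)).hasDerivWithinAt)
    (fun x hx => hg' x (interior_subset hx))

lemma antitoneOn_of_hasDerivAt_nonpos {D : Set ℝ} (hD : Convex ℝ D) {g g' : ℝ → ℝ}
    (hg : ∀ x ∈ D, HasDerivAt g (g' x) x) (hg' : ∀ x ∈ D, g' x ≤ 0) : AntitoneOn g D :=
  antitoneOn_of_hasDerivWithinAt_nonpos hD
    (fun x hx => (hg x hx).continuousAt.continuousWithinAt)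
    (fun x hx => (hg x (interior_subset hx)).hasDerivWithinAt)
    (fun x hx => hg' x (interior_subset hx))

lemma nonpos_of_monotoneOn_Ici_of_integrableOn_Ioi {g : ℝ → ℝ} {b : ℝ}
    (hg : MonotoneOn g (Ici b)) (hint : IntegrableOn g (Ioi b)) : g b ≤ 0 := by
  by_contra! hb
  have hconst : IntegrableOn (fun _ => g b) (Ioi b) := by
    refine hint.mono' aestronglyMeasurable_const ?_
    filter_upwards [self_mem_ae_restrict measurableSet_Ioi] with t ht
    rw [Real.norm_of_nonneg hb.le]
    exact hg self_mem_Ici (mem_Ici_of_Ioi ht) (le_of_lt ht)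
  simp [integrableOn_const_iff, hb.ne'] at hconst

lemma hasDerivAt_sq_of_hasDerivAt {u : ℝ → ℝ} {d t : ℝ} (hu : HasDerivAt u d t) :
    HasDerivAt (fun x => u x ^ 2) (2 * (u t * d)) t :=
  (hu.fun_pow 2).congr_deriv (by ring)

section SecondOrder

variable {u u' V : ℝ → ℝ} {a : ℝ}

lemma monotoneOn_mul_deriv_of_hasDerivAt_deriv_eq_mul
    (hu : ∀ t ∈ Ioi a, HasDerivAt u (u' t) t)
    (hu' : ∀ t ∈ Ioi a, HasDerivAt u' (V t * u t) t) (hV : ∀ t ∈ Ioi a, 0 ≤ V t) :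
    MonotoneOn (fun t => u t * u' t) (Ioi a) :=
  monotoneOn_of_hasDerivAt_nonneg (convex_Ioi a) (fun t ht => (hu t ht).mul (hu' t ht))
    fun t ht => by nlinarith [mul_nonneg (hV t ht) (mul_self_nonneg (u t)), mul_self_nonneg (u' t)]

lemma mul_deriv_nonpos_of_integrableOn_sq
    (hu : ∀ t ∈ Ioi a, HasDerivAt u (u' t) t)
    (hu' : ∀ t ∈ Ioi a, HasDerivAt u' (V t * u t) t) (hV : ∀ t ∈ Ioi a, 0 ≤ V t)
    (hint : IntegrableOn (fun t => u t ^ 2) (Ioi a)) :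
    ∀ t ∈ Ioi a, u t * u' t ≤ 0 := by
  intro t₀ ht₀
  by_contra! hpos
  have hw := monotoneOn_mul_deriv_of_hasDerivAt_deriv_eq_mul hu hu' hV
  have hsq : MonotoneOn (fun t => u t ^ 2) (Ici t₀) := by
    have hsub : Ici t₀ ⊆ Ioi a := Ici_subset_Ioi.2 ht₀
    refine monotoneOn_of_hasDerivAt_nonneg (convex_Ici t₀)
      (fun t ht => hasDerivAt_sq_of_hasDerivAt (hu t (hsub ht))) fun t ht => ?_
    have := hw ht₀ (hsub ht) ht
    dsimp only at this
    linarith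
  have hu₀ : u t₀ ^ 2 ≤ 0 :=
    nonpos_of_monotoneOn_Ici_of_integrableOn_Ioi (g := fun t => u t ^ 2) hsq
      (hint.mono_set (Ioi_subset_Ioi ht₀.le))
  simp [(sq_nonpos_iff _).mp hu₀] at hpos

theorem eq_zero_of_integrableOn_sq_of_tendsto_zero
    (hu : ∀ t ∈ Ioi a, HasDerivAt u (u' t) t)
    (hu' : ∀ t ∈ Ioi a, HasDerivAt u' (V t * u t) t) (hV : ∀ t ∈ Ioi a, 0 ≤ V t)
    (hint : IntegrableOn (fun t => u t ^ 2) (Ioi a)) (h0 : Tendsto u (𝓝[>] a) (𝓝 0)) :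
    ∀ t ∈ Ioi a, u t = 0 := by
  intro t ht
  have hanti : AntitoneOn (fun t => u t ^ 2) (Ioi a) :=
    antitoneOn_of_hasDerivAt_nonpos (convex_Ioi a)
      (fun s hs => hasDerivAt_sq_of_hasDerivAt (hu s hs))
      fun s hs => by linarith [mul_deriv_nonpos_of_integrableOn_sq hu hu' hV hint s hs]
  have ht0 : u t ^ 2 ≤ 0 := by
    refine ge_of_tendsto (by simpa using h0.pow 2) ?_
    filter_upwards [Ioo_mem_nhdsGT ht] with s hs
    exact hanti hs.1 ht hs.2.le
  exact (sq_nonpos_iff _).mp ht0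

end SecondOrder

lemma radial_potential_nonneg {lam q t : ℝ} {l : ℕ} (hlam : lam ≤ 1) (hl : 2 ≤ l)
    (hq : 3 * q ^ 2 ≤ 6 / t ^ 2) : 0 ≤ 1 - lam + (l * (l + 1) : ℝ) / t ^ 2 - 3 * q ^ 2 := by
  have hl' : (2 : ℝ) ≤ l := by exact_mod_cast hl
  have : 6 / t ^ 2 ≤ (l * (l + 1) : ℝ) / t ^ 2 :=
    div_le_div_of_nonneg_right (by nlinarith) (sq_nonneg t)
  linarith

lemma hasDerivAt_deriv_of_contDiffOn_two {f : ℝ → ℝ} {s : Set ℝ} (hf : ContDiffOn ℝ 2 f s)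
    (hs : IsOpen s) {t : ℝ} (ht : t ∈ s) : HasDerivAt (deriv f) (deriv (deriv f) t) t :=
  have hf' : ContDiffOn ℝ 1 (deriv f) s := ((contDiffOn_succ_iff_deriv_of_isOpen hs).mp hf).2.2
  ((hf'.differentiableOn one_ne_zero).differentiableAt (hs.mem_nhds ht)).hasDerivAt

lemma tendsto_mul_nhdsGT_zero_of_bounded {f : ℝ → ℝ} {C δ : ℝ} (hδ : 0 < δ)
    (hC : ∀ t ∈ Ioo 0 δ, |f t| ≤ C) : Tendsto (fun t => t * f t) (𝓝[>] 0) (𝓝 0) :=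
  (tendsto_nhdsWithin_of_tendsto_nhds tendsto_id).zero_mul_isBoundedUnder_le <|
    isBoundedUnder_of_eventually_le (a := C) <| by
      filter_upwards [Ioo_mem_nhdsGT hδ] with t ht using hC t ht

theorem no_eigenfunction_l_ge_two_general (Q : ℝ → ℝ)
    (hQbd : ∀ t > (0:ℝ), 3 * Q t ^ 2 < (6 - 10 ^ (-(20:ℤ))) / t ^ 2)
    (lam : ℝ) (hlam : lam ∈ Icc (0:ℝ) 1) (l : ℕ) (hl : 2 ≤ l)
    (f : ℝ → ℝ) (hf : ContDiffOn ℝ 2 f (Ioi 0))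
    (hode : ∀ t > (0:ℝ),
      -(deriv (deriv f) t + (2 / t) * deriv f t) + (1 - lam) * f t
        + ((l * (l + 1) : ℝ) / t ^ 2 - 3 * Q t ^ 2) * f t = 0)
    (hL2 : IntegrableOn (fun t => f t ^ 2 * t ^ 2) (Ioi 0) volume)
    (hbdd : ∃ C > (0:ℝ), ∃ δ > (0:ℝ), ∀ t ∈ Ioo (0:ℝ) δ, |f t| ≤ C) :
    ∀ t > (0:ℝ), f t = 0 := by
  obtain ⟨C, -, δ, hδ, hC⟩ := hbdd
  have hf₁ : ∀ t ∈ Ioi (0:ℝ), HasDerivAt f (deriv f t) t := fun t ht =>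
    ((hf.differentiableOn two_ne_zero).differentiableAt (isOpen_Ioi.mem_nhds ht)).hasDerivAt
  have hu : ∀ t ∈ Ioi (0:ℝ), HasDerivAt (fun x => x * f x) (f t + t * deriv f t) t :=
    fun t ht => by simpa using (hasDerivAt_id' t).fun_mul (hf₁ t ht)
  have hu' : ∀ t ∈ Ioi (0:ℝ), HasDerivAt (fun x => f x + x * deriv f x)
      ((1 - lam + (l * (l + 1) : ℝ) / t ^ 2 - 3 * Q t ^ 2) * (t * f t)) t := by
    intro t ht
    refine ((hf₁ t ht).add ((hasDerivAt_id' t).fun_mul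
      (hasDerivAt_deriv_of_contDiffOn_two hf isOpen_Ioi ht))).congr_deriv ?_
    -- `(t f)'' = t (f'' + (2/t) f')`
    linear_combination (-t) * hode t ht - 2 * deriv f t * mul_inv_cancel₀ (mem_Ioi.1 ht).ne'
  have hV : ∀ t ∈ Ioi (0:ℝ), 0 ≤ 1 - lam + (l * (l + 1) : ℝ) / t ^ 2 - 3 * Q t ^ 2 :=
    fun t ht => radial_potential_nonneg hlam.2 hl <| (hQbd t ht).le.trans <|
      div_le_div_of_nonneg_right (by linarith [show (0:ℝ) < 10 ^ (-(20:ℤ)) by positivity])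
        (sq_nonneg t)
  have hint : IntegrableOn (fun t => (t * f t) ^ 2) (Ioi 0) :=
    hL2.congr_fun (fun t _ => by ring) measurableSet_Ioi
  intro t ht
  have := eq_zero_of_integrableOn_sq_of_tendsto_zero hu hu' hV hint
    (tendsto_mul_nhdsGT_zero_of_bounded hδ hC) t ht
  exact (mul_eq_zero.mp this).resolve_left ht.ne'

/-- For `l ≥ 2` and `λ ∈ [0,1]`, the radial equation with potential
`l(l+1)/t² - 3Q(t)²` admits no nontrivial solution in `L²(t² dt)` bounded near the origin. -/
theorem no_eigenfunction_l_ge_two (Q : ℝ → ℝ) (hQc : ContinuousOn Q (Ioi 0))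
    (hQbd : ∀ t > (0:ℝ), 3 * Q t ^ 2 < (6 - 10 ^ (-(20:ℤ))) / t ^ 2)
    (lam : ℝ) (hlam : lam ∈ Icc (0:ℝ) 1) (l : ℕ) (hl : 2 ≤ l)
    (f : ℝ → ℝ) (hf : ContDiffOn ℝ 2 f (Ioi 0))
    (hode : ∀ t > (0:ℝ),
      -(deriv (deriv f) t + (2 / t) * deriv f t) + (1 - lam) * f t
        + ((l * (l + 1) : ℝ) / t ^ 2 - 3 * Q t ^ 2) * f t = 0)
    (hL2 : IntegrableOn (fun t => f t ^ 2 * t ^ 2) (Ioi 0) volume)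
    (hbdd : ∃ C > (0:ℝ), ∃ δ > (0:ℝ), ∀ t ∈ Ioo (0:ℝ) δ, |f t| ≤ C) :
    ∀ t > (0:ℝ), f t = 0 :=
  no_eigenfunction_l_ge_two_general Q hQbd lam hlam l hl f hf hode hL2 hbdd
end

section
/- Let t₀ > 0 and 0 < α < 1/4, and let G₁ : [2.5, ∞) → ℝ be a C² solution of G₁''(t) = (α/(t + t₀)²) G₁(t) with G₁(2.5) > 0 and G₁'(2.5) > 0. Then there exist constants α₁ > 0 and α₂ > 0 such that G₁(t) ≥ α₁ t^{α₂} for all t ≥ 2.5. -/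
/-!
Wherever `G₁ > 0` the equation gives `G₁'' ≥ 0`, so `G₁` is convex there and lies above its
tangent line at `2.5`, whose value and slope are positive. Hence `G₁` never reaches zero, and it
grows at least linearly: the power `t ^ 1` already works.
-/

open Set Real

theorem ContDiffOn.convexOn_of_deriv2_nonneg {D : Set ℝ} {f : ℝ → ℝ} (hf : ContDiffOn ℝ 2 f D)
    (hD : Convex ℝ D) (hf'' : ∀ x ∈ interior D, 0 ≤ deriv (deriv f) x) : ConvexOn ℝ D f := by
  obtain ⟨hdf, -, hdf'⟩ :=
    (contDiffOn_succ_iff_deriv_of_isOpen (n := 1) isOpen_interior).1 (hf.mono interior_subset)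
  exact _root_.convexOn_of_deriv2_nonneg hD hf.continuousOn hdf
    (hdf'.differentiableOn one_ne_zero) hf''

theorem ConvexOn.add_deriv_mul_sub_le {S : Set ℝ} {f : ℝ → ℝ} {x y : ℝ} (hf : ConvexOn ℝ S f)
    (hx : x ∈ S) (hy : y ∈ S) (hxy : x ≤ y) (hd : DifferentiableAt ℝ f x) :
    f x + deriv f x * (y - x) ≤ f y := by
  rcases hxy.eq_or_lt with rfl | hlt
  · simp
  have hslope := hf.deriv_le_slope hx hy hlt hd
  rw [slope_def_field, le_div_iff₀ (sub_pos.2 hlt)] at hslope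
  linarith

/-- At a first zero `b` of `f`, the tangent line at `a` would already lie above `f b ≤ 0`. -/
theorem pos_of_convexOn_Icc_of_pos {f : ℝ → ℝ} {a : ℝ} (hf : ContinuousOn f (Ici a))
    (hd : DifferentiableAt ℝ f a) (ha : 0 < f a) (hda : 0 ≤ deriv f a)
    (hconv : ∀ b, (∀ t ∈ Ioo a b, 0 < f t) → ConvexOn ℝ (Icc a b) f) :
    ∀ t ≥ a, 0 < f t := by
  intro t ht
  by_contra! hneg
  set B := Icc a t ∩ f ⁻¹' Iic 0
  have hBbdd : BddBelow B := ⟨a, fun x hx => hx.1.1⟩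
  have hBclosed : IsClosed B :=
    (hf.mono Icc_subset_Ici_self).preimage_isClosed_of_isClosed isClosed_Icc isClosed_Iic
  have hbB : sInf B ∈ B := hBclosed.csInf_mem ⟨t, ⟨ht, le_rfl⟩, hneg⟩ hBbdd
  set b := sInf B
  have hfb : f b ≤ 0 := hbB.2
  have hab : a < b := hbB.1.1.lt_of_ne fun h => by rw [← h] at hfb; linarith
  have hpos : ∀ s ∈ Ioo a b, 0 < f s := fun s hs => by
    by_contra! h
    exact (csInf_le hBbdd ⟨⟨hs.1.le, hs.2.le.trans hbB.1.2⟩, h⟩).not_gt hs.2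
  have htan := (hconv b hpos).add_deriv_mul_sub_le (left_mem_Icc.2 hab.le)
    (right_mem_Icc.2 hab.le) hab.le hd
  nlinarith [mul_nonneg hda (sub_pos.2 hab).le]

theorem min_mul_le_add_mul_sub {a c y t : ℝ} (ha : 0 < a) (hat : a ≤ t) :
    min c (y / a) * t ≤ y + c * (t - a) := by
  have hm : min c (y / a) * a ≤ y := (mul_le_mul_of_nonneg_right (min_le_right _ _) ha.le).trans
    (div_mul_cancel₀ y ha.ne').le
  nlinarith [mul_le_mul_of_nonneg_right (min_le_left c (y / a)) (sub_nonneg.2 hat)]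

theorem euler_power_growth_general (t₀ α : ℝ) (hα : 0 < α)
    (G₁ : ℝ → ℝ) (hG : ContDiffOn ℝ 2 G₁ (Ici 2.5))
    (hode : ∀ t ≥ (2.5:ℝ), deriv (deriv G₁) t = (α / (t + t₀) ^ 2) * G₁ t)
    (hinit : 0 < G₁ 2.5) (hinit' : 0 < deriv G₁ 2.5) :
    ∃ α₁ > (0:ℝ), ∃ α₂ > (0:ℝ), ∀ t ≥ (2.5:ℝ), α₁ * t ^ α₂ ≤ G₁ t := by
  have hd : DifferentiableAt ℝ G₁ 2.5 := differentiableAt_of_deriv_ne_zero hinit'.ne'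
  have hconv : ∀ b, (∀ t ∈ Ioo 2.5 b, 0 < G₁ t) → ConvexOn ℝ (Icc 2.5 b) G₁ := fun b hb =>
    (hG.mono Icc_subset_Ici_self).convexOn_of_deriv2_nonneg (convex_Icc _ _) fun t ht => by
      rw [interior_Icc] at ht
      rw [hode t ht.1.le]
      have hGt := hb t ht
      positivity
  have hpos := pos_of_convexOn_Icc_of_pos hG.continuousOn hd hinit hinit'.le hconv
  refine ⟨min (deriv G₁ 2.5) (G₁ 2.5 / 2.5), lt_min hinit' (by positivity), 1, one_pos,
    fun t ht => ?_⟩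
  have htan := (hconv t fun s hs => hpos s hs.1.le).add_deriv_mul_sub_le (left_mem_Icc.2 ht)
    (right_mem_Icc.2 ht) ht hd
  rw [rpow_one]
  exact (min_mul_le_add_mul_sub (by norm_num) ht).trans htan

/-- Euler-equation comparison: a solution of `G₁'' = α/(t+t₀)² G₁` with positive data
at `t = 2.5` grows at least like a positive power of `t`. -/
theorem euler_power_growth (t₀ α : ℝ) (ht₀ : 0 < t₀) (hα : 0 < α) (hα' : α < 1/4)
    (G₁ : ℝ → ℝ) (hG : ContDiffOn ℝ 2 G₁ (Ici 2.5))
    (hode : ∀ t ≥ (2.5:ℝ), deriv (deriv G₁) t = (α / (t + t₀) ^ 2) * G₁ t)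
    (hinit : 0 < G₁ 2.5) (hinit' : 0 < deriv G₁ 2.5) :
    ∃ α₁ > (0:ℝ), ∃ α₂ > (0:ℝ), ∀ t ≥ (2.5:ℝ), α₁ * t ^ α₂ ≤ G₁ t :=
  euler_power_growth_general t₀ α hα G₁ hG hode hinit hinit'
end

section
/- Let W : [1, ∞) → ℝ be continuous with W(t) = 2/t² − 3Q(t)², where 3Q(t)² ≤ e^{−2t} for large t. Then there exists a C² solution Θ₁ of Θ₁'' = W Θ₁ on [1, ∞) of the form Θ₁(t) = t² + η₁(t), where sup_{t≥1} |e^t η₁(t)| < ∞. -/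
open Set Real

open MeasureTheory Filter

lemma gjs_y_le (y : ℝ) (hy : 0 ≤ y) : y ≤ Real.exp (y/2) := by
  have h := Real.add_one_le_exp (y/4)
  have h2 : Real.exp (y/2) = Real.exp (y/4) * Real.exp (y/4) := by
    rw [← Real.exp_add]; ring_nf
  nlinarith [sq_nonneg (1 - y/4), Real.exp_pos (y/4)]

lemma gjs_exp_shift_int (c a : ℝ) (hc : 0 < c) :
    IntegrableOn (fun s => Real.exp (-(c*(s-a)))) (Ioi a) := by
  have h := (exp_neg_integrableOn_Ioi a hc).const_mul (Real.exp (c*a))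
  refine MeasureTheory.IntegrableOn.congr_fun h (fun s _ => ?_) measurableSet_Ioi
  rw [← Real.exp_add]; congr 1; ring

lemma gjs_exp_shift_val (c a : ℝ) (hc : 0 < c) :
    ∫ s in Ioi a, Real.exp (-(c*(s-a))) = 1/c := by
  have hderiv : ∀ x ∈ Ici a, HasDerivAt (fun s => -Real.exp (-(c*(s-a)))/c)
      (Real.exp (-(c*(x-a)))) x := by
    intro x _
    have h1 : HasDerivAt (fun s : ℝ => -(c*(s-a))) (-c) x := by
      have h := (((hasDerivAt_id x).sub_const a).const_mul c).neg
      simp only [mul_one] at h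
      exact h
    have h2 := (h1.exp).neg.div_const c
    exact h2.congr_deriv (by rw [mul_neg, neg_neg, mul_div_assoc, div_self hc.ne', mul_one])
  have hmap : Tendsto (fun s : ℝ => c*(s-a)) atTop atTop :=
    (tendsto_atTop_add_const_right atTop (-a) tendsto_id).const_mul_atTop hc
  have htend : Tendsto (fun s => -Real.exp (-(c*(s-a)))/c) atTop (nhds 0) := by
    have h0 : Tendsto (fun s : ℝ => Real.exp (-(c*(s-a)))) atTop (nhds 0) := by
      have := Real.tendsto_exp_neg_atTop_nhds_zero.comp hmap
      simpa [Function.comp_def] using this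
    simpa using h0.neg.div_const c
  have := integral_Ioi_of_hasDerivAt_of_tendsto' hderiv (gjs_exp_shift_int c a hc) htend
  rw [this]; simp; ring

lemma gjs_xexp (c x : ℝ) (hc : 0 < c) (hx : 0 ≤ x) :
    x * Real.exp (-(c*x)) ≤ (1/c) * Real.exp (-(c/2*x)) := by
  have h := gjs_y_le (c*x) (mul_nonneg hc.le hx)
  have e1 : Real.exp (-(c*x)) = Real.exp (-(c/2*x)) * Real.exp (-(c/2*x)) := by
    rw [← Real.exp_add]; congr 1; ring
  have e2 : Real.exp (c*x/2) * Real.exp (-(c/2*x)) = 1 := by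
    rw [← Real.exp_add, show c*x/2 + -(c/2*x) = 0 by ring]; exact Real.exp_zero
  have h3 : x ≤ Real.exp (c*x/2)/c := by rw [le_div_iff₀ hc]; nlinarith [h]
  calc x * Real.exp (-(c*x)) = x * (Real.exp (-(c/2*x)) * Real.exp (-(c/2*x))) := by rw [e1]
    _ ≤ Real.exp (c*x/2)/c * (Real.exp (-(c/2*x)) * Real.exp (-(c/2*x))) :=
        mul_le_mul_of_nonneg_right h3 (by positivity)
    _ = (Real.exp (c*x/2) * Real.exp (-(c/2*x))) * Real.exp (-(c/2*x)) / c := by ring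
    _ = (1/c) * Real.exp (-(c/2*x)) := by rw [e2]; ring

lemma gjs_decay_int2 (a c₁ c₂ A₁ A₂ : ℝ) (hc₁ : 0 < c₁) (hc₂ : 0 < c₂) {f : ℝ → ℝ}
    (hf : Continuous f)
    (hb : ∀ s, a ≤ s → |f s| ≤ A₁ * Real.exp (-(c₁*(s-a))) + A₂ * Real.exp (-(c₂*(s-a)))) :
    IntegrableOn f (Ioi a) ∧ |∫ s in Ioi a, f s| ≤ A₁/c₁ + A₂/c₂ := by
  have hg : IntegrableOn (fun s => A₁ * Real.exp (-(c₁*(s-a))) + A₂ * Real.exp (-(c₂*(s-a))))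
      (Ioi a) := ((gjs_exp_shift_int c₁ a hc₁).const_mul A₁).add
        ((gjs_exp_shift_int c₂ a hc₂).const_mul A₂)
  have hint : IntegrableOn f (Ioi a) := by
    refine Integrable.mono' hg hf.aestronglyMeasurable.restrict ?_
    refine (ae_restrict_iff' measurableSet_Ioi).2 (ae_of_all _ fun s hs => ?_)
    simpa [Real.norm_eq_abs] using hb s (le_of_lt hs)
  refine ⟨hint, ?_⟩
  calc |∫ s in Ioi a, f s| ≤ ∫ s in Ioi a, |f s| := by
        simpa [Real.norm_eq_abs] using
          norm_integral_le_integral_norm (μ := volume.restrict (Ioi a)) f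
    _ ≤ ∫ s in Ioi a, (A₁ * Real.exp (-(c₁*(s-a))) + A₂ * Real.exp (-(c₂*(s-a)))) := by
        exact setIntegral_mono_on hint.abs hg measurableSet_Ioi fun s hs => hb s (le_of_lt hs)
    _ = A₁ * (1/c₁) + A₂ * (1/c₂) := by
        rw [integral_add ((gjs_exp_shift_int c₁ a hc₁).const_mul A₁)
          ((gjs_exp_shift_int c₂ a hc₂).const_mul A₂), MeasureTheory.integral_const_mul,
          MeasureTheory.integral_const_mul, gjs_exp_shift_val c₁ a hc₁, gjs_exp_shift_val c₂ a hc₂]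
    _ = A₁/c₁ + A₂/c₂ := by ring

lemma gjs_decay_int (a c A : ℝ) (hc : 0 < c) {f : ℝ → ℝ} (hf : Continuous f)
    (hb : ∀ s, a ≤ s → |f s| ≤ A * Real.exp (-(c*(s-a)))) :
    IntegrableOn f (Ioi a) ∧ |∫ s in Ioi a, f s| ≤ A/c := by
  have := gjs_decay_int2 a c 1 A 0 hc one_pos hf (fun s hs => by simpa using hb s hs)
  simpa using this

lemma gjs_linear_int2 (a c₁ c₂ A₁ A₂ : ℝ) (hc₁ : 0 < c₁) (hc₂ : 0 < c₂)
    (hA₁ : 0 ≤ A₁) (hA₂ : 0 ≤ A₂) {f : ℝ → ℝ} (hf : Continuous f)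
    (hb : ∀ s, a ≤ s → |f s| ≤ A₁ * Real.exp (-(c₁*(s-a))) + A₂ * Real.exp (-(c₂*(s-a)))) :
    IntegrableOn (fun s => (s-a) * f s) (Ioi a) ∧
      |∫ s in Ioi a, (s-a) * f s| ≤ 2*A₁/c₁^2 + 2*A₂/c₂^2 := by
  have hbF : ∀ s, a ≤ s → |(s-a) * f s| ≤
      (A₁/c₁) * Real.exp (-(c₁/2*(s-a))) + (A₂/c₂) * Real.exp (-(c₂/2*(s-a))) := by
    intro s hs
    have hx : 0 ≤ s - a := by linarith
    have h1 := gjs_xexp c₁ (s-a) hc₁ hx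
    have h2 := gjs_xexp c₂ (s-a) hc₂ hx
    rw [abs_mul, abs_of_nonneg hx]
    calc (s-a) * |f s|
        ≤ (s-a) * (A₁ * Real.exp (-(c₁*(s-a))) + A₂ * Real.exp (-(c₂*(s-a)))) :=
          mul_le_mul_of_nonneg_left (hb s hs) hx
      _ = A₁ * ((s-a) * Real.exp (-(c₁*(s-a)))) + A₂ * ((s-a) * Real.exp (-(c₂*(s-a)))) := by
          ring
      _ ≤ A₁ * ((1/c₁) * Real.exp (-(c₁/2*(s-a)))) + A₂ * ((1/c₂) * Real.exp (-(c₂/2*(s-a)))) :=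
          by gcongr
      _ = (A₁/c₁) * Real.exp (-(c₁/2*(s-a))) + (A₂/c₂) * Real.exp (-(c₂/2*(s-a))) := by ring
  have hFc : Continuous fun s => (s-a) * f s := (continuous_id.sub continuous_const).mul hf
  obtain ⟨hi, hv⟩ := gjs_decay_int2 a (c₁/2) (c₂/2) (A₁/c₁) (A₂/c₂) (half_pos hc₁)
    (half_pos hc₂) hFc hbF
  refine ⟨hi, hv.trans (le_of_eq ?_)⟩
  field_simp

lemma gjs_split {f : ℝ → ℝ} (hint : ∀ a : ℝ, IntegrableOn f (Ioi a)) (a t : ℝ) :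
    ∫ s in Ioi t, f s = (∫ s in Ioi a, f s) - ∫ s in a..t, f s := by
  rcases le_total a t with h | h
  · have hu : Ioc a t ∪ Ioi t = Ioi a := Ioc_union_Ioi_eq_Ioi h
    have hd : Disjoint (Ioc a t) (Ioi t) := Ioc_disjoint_Ioi le_rfl
    have := MeasureTheory.setIntegral_union hd measurableSet_Ioi
      ((hint a).mono_set Ioc_subset_Ioi_self) (hint t)
    rw [hu] at this
    rw [intervalIntegral.integral_of_le h]
    linarith [this]
  · have hu : Ioc t a ∪ Ioi a = Ioi t := Ioc_union_Ioi_eq_Ioi h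
    have hd : Disjoint (Ioc t a) (Ioi a) := Ioc_disjoint_Ioi le_rfl
    have := MeasureTheory.setIntegral_union hd measurableSet_Ioi
      ((hint t).mono_set Ioc_subset_Ioi_self) (hint a)
    rw [hu] at this
    rw [show (∫ s in a..t, f s) = -∫ s in t..a, f s from (intervalIntegral.integral_symm t a),
      intervalIntegral.integral_of_le h]
    linarith [this]

lemma gjs_hasDerivAt_P {f : ℝ → ℝ} (hf : Continuous f) (hint : ∀ a : ℝ, IntegrableOn f (Ioi a))
    (t : ℝ) : HasDerivAt (fun u => ∫ s in Ioi u, f s) (-(f t)) t := by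
  have hrep : (fun u => ∫ s in Ioi u, f s)
      = fun u => (∫ s in Ioi 0, f s) - ∫ s in (0:ℝ)..u, f s :=
    funext fun u => gjs_split hint 0 u
  rw [hrep]
  have h1 : HasDerivAt (fun u => ∫ s in (0:ℝ)..u, f s) (f t) t :=
    intervalIntegral.integral_hasDerivAt_right (hf.intervalIntegrable 0 t)
      (hf.stronglyMeasurableAtFilter volume (nhds t)) hf.continuousAt
  simpa using h1.const_sub (∫ s in Ioi 0, f s)

lemma gjs_hasDerivAt_J {f : ℝ → ℝ} (hf : Continuous f)
    (hint1 : ∀ a : ℝ, IntegrableOn f (Ioi a))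
    (hint2 : ∀ a : ℝ, IntegrableOn (fun s => (s-a) * f s) (Ioi a)) (t : ℝ) :
    HasDerivAt (fun r => ∫ s in Ioi r, (s-r) * f s) (-∫ s in Ioi t, f s) t := by
  have hint2' : ∀ a : ℝ, IntegrableOn (fun s => s * f s) (Ioi a) := by
    intro a
    have h : (fun s => s * f s) = fun s => (s-a) * f s + a * f s := by funext s; ring
    rw [h]
    exact (hint2 a).add ((hint1 a).const_mul a)
  have hrep : (fun r => ∫ s in Ioi r, (s-r) * f s)
      = fun r => (∫ s in Ioi r, s * f s) - r * ∫ s in Ioi r, f s := by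
    funext r
    have h : ∀ s : ℝ, (s-r) * f s = s * f s - r * f s := fun s => by ring
    simp_rw [h]
    rw [MeasureTheory.integral_sub (hint2' r) ((hint1 r).const_mul r),
      MeasureTheory.integral_const_mul]
  rw [hrep]
  have h1 : HasDerivAt (fun r => ∫ s in Ioi r, s * f s) (-(t * f t)) t :=
    gjs_hasDerivAt_P (continuous_id.mul hf) hint2' t
  have h2 : HasDerivAt (fun r => r * ∫ s in Ioi r, f s)
      (1 * (∫ s in Ioi t, f s) + t * -(f t)) t :=
    (hasDerivAt_id t).mul (gjs_hasDerivAt_P hf hint1 t)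
  exact (h1.sub h2).congr_deriv (by ring)

lemma gjs_linear_int (a c A : ℝ) (hc : 0 < c) (hA : 0 ≤ A) {f : ℝ → ℝ} (hf : Continuous f)
    (hb : ∀ s, a ≤ s → |f s| ≤ A * Real.exp (-(c*(s-a)))) :
    IntegrableOn (fun s => (s-a) * f s) (Ioi a) ∧
      |∫ s in Ioi a, (s-a) * f s| ≤ 2*A/c^2 := by
  have := gjs_linear_int2 a c 1 A 0 hc one_pos hA le_rfl hf (fun s hs => by simpa using hb s hs)
  simpa using this
lemma gjs_main (g K : ℝ → ℝ) (hg : Continuous g) (hK : Continuous K)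
    (T' G B ε μ : ℝ) (hT' : 0 ≤ T') (hG : 0 ≤ G) (hB : 0 ≤ B) (hε : 0 ≤ ε)
    (hμ : 3/2 ≤ μ)
    (hgb : ∀ s : ℝ, |g s| ≤ G * Real.exp (-(3/2*s)))
    (hKb : ∀ s : ℝ, |K s| ≤ B) (hKt : ∀ s : ℝ, T' ≤ s → |K s| ≤ ε)
    (hsmall : 2*B/μ^2 + (8/9)*ε ≤ 1/2) :
    ∃ η P : ℝ → ℝ, Continuous η ∧ (∀ t, HasDerivAt η (-(P t)) t) ∧
      (∀ t, HasDerivAt P (-(g t + K t * η t)) t) ∧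
      ∃ M : ℝ, ∀ t, 1 ≤ t → |η t| ≤ M * Real.exp (-t) := by
  have hhalf : ((1/2 : NNReal) : ℝ) = 1/2 := by norm_num
  have hμ0 : 0 < μ := by linarith
  have hμ3 : (0:ℝ) ≤ μ - 3/2 := by linarith
  set φ : ℝ → ℝ := fun t => μ * min t T' + 3/2 * (t - min t T') with hφ
  have hφc : Continuous φ := by
    apply Continuous.add
    · exact continuous_const.mul (continuous_id.min continuous_const)
    · exact continuous_const.mul (continuous_id.sub (continuous_id.min continuous_const))
  have R1 : ∀ t s : ℝ, t ≤ s → φ t + 3/2*(s-t) ≤ φ s := by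
    intro t s h
    simp only [hφ]
    rcases le_total t T' with ht | ht <;> rcases le_total s T' with hs | hs
    · rw [min_eq_left ht, min_eq_left hs]
      nlinarith [mul_nonneg hμ3 (sub_nonneg.2 h)]
    · rw [min_eq_left ht, min_eq_right hs]
      nlinarith [mul_nonneg hμ3 (sub_nonneg.2 ht)]
    · rw [min_eq_right ht, min_eq_left hs]
      have h1 : T' ≤ s := le_trans ht h
      nlinarith [mul_nonneg hμ3 (sub_nonneg.2 h1), mul_nonneg hμ3 (sub_nonneg.2 hs)]
    · rw [min_eq_right ht, min_eq_right hs]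
      linarith
  have R2 : ∀ t s : ℝ, t ≤ s → s ≤ T' → φ s = φ t + μ*(s-t) := by
    intro t s h hs
    simp only [hφ]
    rw [min_eq_left hs, min_eq_left (le_trans h hs)]
    ring
  have R3 : ∀ t : ℝ, 1 ≤ t → t ≤ φ t := by
    intro t ht
    have hm1 : 0 ≤ min t T' := le_min (by linarith) hT'
    have hm2 : min t T' ≤ t := min_le_left _ _
    simp only [hφ]
    nlinarith [mul_nonneg hμ3 hm1]
  have E1 : ∀ t s : ℝ, t ≤ s →
      Real.exp (-(φ s)) ≤ Real.exp (-(φ t)) * Real.exp (-(3/2*(s-t))) := by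
    intro t s h
    rw [← Real.exp_add]
    exact Real.exp_le_exp.2 (by linarith [R1 t s h])
  have E2 : ∀ t s : ℝ, t ≤ s → s ≤ T' →
      Real.exp (-(φ s)) = Real.exp (-(φ t)) * Real.exp (-(μ*(s-t))) := by
    intro t s h hs
    rw [← Real.exp_add]
    congr 1
    have := R2 t s h hs
    linarith
  -- the integrand associated to u
  set fu : (BoundedContinuousFunction ℝ ℝ) → ℝ → ℝ :=
    fun u s => g s + K s * (Real.exp (-(φ s)) * u s) with hfu
  have hfuc : ∀ u, Continuous (fu u) := fun u =>
    hg.add (hK.mul ((Real.continuous_exp.comp hφc.neg).mul u.continuous))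
  have hApos : ∀ (u : BoundedContinuousFunction ℝ ℝ) (t : ℝ),
      0 ≤ G * Real.exp (-(3/2*t)) + B*‖u‖*Real.exp (-(φ t)) := by
    intro u t
    have := norm_nonneg u
    positivity
  have hfub : ∀ (u : BoundedContinuousFunction ℝ ℝ) (t s : ℝ), t ≤ s →
      |fu u s| ≤ (G * Real.exp (-(3/2*t)) + B*‖u‖*Real.exp (-(φ t)))
        * Real.exp (-(3/2*(s-t))) := by
    intro u t s h
    have hgs : |g s| ≤ G * Real.exp (-(3/2*t)) * Real.exp (-(3/2*(s-t))) := by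
      have h0 := hgb s
      rwa [show -(3/2*s) = -(3/2*t) + -(3/2*(s-t)) by ring, Real.exp_add, ← mul_assoc] at h0
    have hus : |u s| ≤ ‖u‖ := by
      simpa [Real.norm_eq_abs] using u.norm_coe_le_norm s
    have hKs : |K s * (Real.exp (-(φ s)) * u s)| ≤
        B*‖u‖*Real.exp (-(φ t)) * Real.exp (-(3/2*(s-t))) := by
      rw [abs_mul, abs_mul, abs_of_pos (Real.exp_pos _)]
      calc |K s| * (Real.exp (-(φ s)) * |u s|)
          ≤ B * ((Real.exp (-(φ t)) * Real.exp (-(3/2*(s-t)))) * ‖u‖) := by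
            gcongr <;> first
              | exact hKb s
              | exact E1 t s h
              | exact hus
        _ = B*‖u‖*Real.exp (-(φ t)) * Real.exp (-(3/2*(s-t))) := by ring
    calc |fu u s| ≤ |g s| + |K s * (Real.exp (-(φ s)) * u s)| := abs_add_le _ _
      _ ≤ G * Real.exp (-(3/2*t)) * Real.exp (-(3/2*(s-t)))
          + B*‖u‖*Real.exp (-(φ t)) * Real.exp (-(3/2*(s-t))) := add_le_add hgs hKs
      _ = (G * Real.exp (-(3/2*t)) + B*‖u‖*Real.exp (-(φ t)))
          * Real.exp (-(3/2*(s-t))) := by ring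
  have hint1 : ∀ (u : BoundedContinuousFunction ℝ ℝ) (a : ℝ), IntegrableOn (fu u) (Ioi a) :=
    fun u a => (gjs_decay_int a (3/2) _ (by norm_num) (hfuc u) (fun s hs => hfub u a s hs)).1
  have hint2 : ∀ (u : BoundedContinuousFunction ℝ ℝ) (a : ℝ),
      IntegrableOn (fun s => (s-a) * fu u s) (Ioi a) :=
    fun u a => (gjs_linear_int a (3/2) _ (by norm_num) (hApos u a) (hfuc u)
      (fun s hs => hfub u a s hs)).1
  -- the operator
  set Fu : (BoundedContinuousFunction ℝ ℝ) → ℝ → ℝ :=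
    fun u t => Real.exp (φ t) * ∫ s in Ioi t, (s-t) * fu u s with hFu
  have hIb : ∀ (u : BoundedContinuousFunction ℝ ℝ) (t : ℝ),
      |∫ s in Ioi t, (s-t) * fu u s| ≤
        2*(G * Real.exp (-(3/2*t)) + B*‖u‖*Real.exp (-(φ t)))/(3/2)^2 :=
    fun u t => (gjs_linear_int t (3/2) _ (by norm_num) (hApos u t) (hfuc u)
      (fun s hs => hfub u t s hs)).2
  have hFb : ∀ (u : BoundedContinuousFunction ℝ ℝ) (t : ℝ),
      |Fu u t| ≤ (8/9) * (G * Real.exp ((μ-3/2)*T') + B*‖u‖) := by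
    intro u t
    have e3 : Real.exp (φ t) * Real.exp (-(φ t)) = 1 := by
      rw [← Real.exp_add]; simp
    have e5 : Real.exp (φ t) * Real.exp (-(3/2*t)) ≤ Real.exp ((μ-3/2)*T') := by
      rw [← Real.exp_add]
      apply Real.exp_le_exp.2
      have h6 : min t T' ≤ T' := min_le_right _ _
      simp only [hφ]
      nlinarith [mul_nonneg hμ3 (sub_nonneg.2 h6)]
    have h7 := hIb u t
    have h8 : |Fu u t| = Real.exp (φ t) * |∫ s in Ioi t, (s-t) * fu u s| := by
      rw [hFu, abs_mul, abs_of_pos (Real.exp_pos _)]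
    rw [h8]
    calc Real.exp (φ t) * |∫ s in Ioi t, (s-t) * fu u s|
        ≤ Real.exp (φ t) * (2*(G * Real.exp (-(3/2*t)) + B*‖u‖*Real.exp (-(φ t)))/(3/2)^2) :=
          mul_le_mul_of_nonneg_left h7 (Real.exp_pos _).le
      _ = (8/9) * (G * (Real.exp (φ t) * Real.exp (-(3/2*t)))
            + B*‖u‖*(Real.exp (φ t) * Real.exp (-(φ t)))) := by ring
      _ ≤ (8/9) * (G * Real.exp ((μ-3/2)*T') + B*‖u‖) := by
          rw [e3]
          have := mul_le_mul_of_nonneg_left e5 hG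
          nlinarith [this]
  have hFc : ∀ u : BoundedContinuousFunction ℝ ℝ, Continuous (Fu u) := by
    intro u
    apply (Real.continuous_exp.comp hφc).mul
    exact continuous_iff_continuousAt.2 fun t =>
      (gjs_hasDerivAt_J (hfuc u) (hint1 u) (hint2 u) t).continuousAt
  set Φ : (BoundedContinuousFunction ℝ ℝ) → (BoundedContinuousFunction ℝ ℝ) :=
    fun u => BoundedContinuousFunction.ofNormedAddCommGroup (Fu u) (hFc u) _
      (fun t => by rw [Real.norm_eq_abs]; exact hFb u t) with hΦ
  have hΦapp : ∀ (u : BoundedContinuousFunction ℝ ℝ) (t : ℝ), Φ u t = Fu u t := by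
    intro u t; rw [hΦ]; rfl
  -- contraction estimate
  have hcontr : ∀ u w : BoundedContinuousFunction ℝ ℝ, ∀ t : ℝ,
      |Fu u t - Fu w t| ≤ (1/2) * dist u w := by
    intro u w t
    set d := dist u w with hd
    have hd0 : 0 ≤ d := dist_nonneg
    set D : ℝ → ℝ := fun s => K s * (Real.exp (-(φ s)) * (u s - w s)) with hD
    have hDc : Continuous D := hK.mul ((Real.continuous_exp.comp hφc.neg).mul
      (u.continuous.sub w.continuous))
    have hDb : ∀ s, t ≤ s → |D s| ≤ (d * Real.exp (-(φ t)) * B) * Real.exp (-(μ*(s-t)))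
        + (d * Real.exp (-(φ t)) * ε) * Real.exp (-(3/2*(s-t))) := by
      intro s hs
      have huw : |u s - w s| ≤ d := by
        have h1 := BoundedContinuousFunction.dist_coe_le_dist (f := u) (g := w) s
        rwa [Real.dist_eq] at h1
      rcases le_total s T' with hsT | hsT
      · have h2 : |D s| ≤ B * (Real.exp (-(φ s)) * d) := by
          rw [hD, abs_mul, abs_mul, abs_of_pos (Real.exp_pos _)]
          gcongr <;> first
            | exact hKb s
            | exact huw
        have h3 : Real.exp (-(φ s)) = Real.exp (-(φ t)) * Real.exp (-(μ*(s-t))) := E2 t s hs hsT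
        have h4 : (0:ℝ) ≤ (d * Real.exp (-(φ t)) * ε) * Real.exp (-(3/2*(s-t))) := by positivity
        calc |D s| ≤ B * (Real.exp (-(φ s)) * d) := h2
          _ = (d * Real.exp (-(φ t)) * B) * Real.exp (-(μ*(s-t))) := by rw [h3]; ring
          _ ≤ _ := by linarith
      · have h2 : |D s| ≤ ε * (Real.exp (-(φ s)) * d) := by
          rw [hD, abs_mul, abs_mul, abs_of_pos (Real.exp_pos _)]
          gcongr <;> first
            | exact hKt s hsT
            | exact huw
        have h3 := E1 t s hs
        have h4 : (0:ℝ) ≤ (d * Real.exp (-(φ t)) * B) * Real.exp (-(μ*(s-t))) := by positivity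
        calc |D s| ≤ ε * (Real.exp (-(φ s)) * d) := h2
          _ ≤ ε * ((Real.exp (-(φ t)) * Real.exp (-(3/2*(s-t)))) * d) := by
              gcongr
          _ = (d * Real.exp (-(φ t)) * ε) * Real.exp (-(3/2*(s-t))) := by ring
          _ ≤ _ := by linarith
    obtain ⟨hDi, hDv⟩ := gjs_linear_int2 t μ (3/2) (d * Real.exp (-(φ t)) * B)
      (d * Real.exp (-(φ t)) * ε) hμ0 (by norm_num) (by positivity) (by positivity) hDc hDb
    have hsub : Fu u t - Fu w t = Real.exp (φ t) * ∫ s in Ioi t, (s-t) * D s := by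
      rw [hFu]
      rw [← mul_sub, ← MeasureTheory.integral_sub (hint2 u t) (hint2 w t)]
      congr 2
      funext s
      rw [hfu, hD]
      ring
    rw [hsub, abs_mul, abs_of_pos (Real.exp_pos _)]
    have e3 : Real.exp (φ t) * Real.exp (-(φ t)) = 1 := by rw [← Real.exp_add]; simp
    calc Real.exp (φ t) * |∫ s in Ioi t, (s-t) * D s|
        ≤ Real.exp (φ t) * (2*(d * Real.exp (-(φ t)) * B)/μ^2
            + 2*(d * Real.exp (-(φ t)) * ε)/(3/2)^2) :=
          mul_le_mul_of_nonneg_left hDv (Real.exp_pos _).le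
      _ = (Real.exp (φ t) * Real.exp (-(φ t))) * d * (2*B/μ^2 + (8/9)*ε) := by
          ring
      _ = d * (2*B/μ^2 + (8/9)*ε) := by rw [e3]; ring
      _ ≤ d * (1/2) := mul_le_mul_of_nonneg_left hsmall hd0
      _ = (1/2) * d := mul_comm _ _
  -- fixed point
  have hlip : LipschitzWith (1/2 : NNReal) Φ := by
    apply LipschitzWith.of_dist_le_mul
    intro u w
    have h0 : (0:ℝ) ≤ ((1/2 : NNReal) : ℝ) * dist u w := by positivity
    refine (BoundedContinuousFunction.dist_le h0).2 fun t => ?_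
    rw [hΦapp, hΦapp, Real.dist_eq]
    calc |Fu u t - Fu w t| ≤ (1/2) * dist u w := hcontr u w t
      _ = ((1/2 : NNReal) : ℝ) * dist u w := by rw [hhalf]
  have hcw : ContractingWith (1/2 : NNReal) Φ :=
    ⟨by exact_mod_cast (by norm_num : (1/2:ℝ) < 1), hlip⟩
  set ustar : BoundedContinuousFunction ℝ ℝ := ContractingWith.fixedPoint Φ hcw with hustar
  have hfix : ∀ t, Fu ustar t = ustar t := by
    intro t
    have h1 : Φ ustar = ustar := hcw.fixedPoint_isFixedPt
    conv_rhs => rw [← h1]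
    rw [hΦapp]
  set η : ℝ → ℝ := fun t => Real.exp (-(φ t)) * ustar t with hη
  have hηrep : η = fun r => ∫ s in Ioi r, (s-r) * fu ustar s := by
    funext t
    rw [hη]
    dsimp only
    rw [← hfix t, hFu]
    dsimp only
    rw [← mul_assoc, ← Real.exp_add]
    simp
  have hηψ : ∀ s, fu ustar s = g s + K s * η s := by
    intro s
    rw [hfu, hη]
  have hηc : Continuous η := (Real.continuous_exp.comp hφc.neg).mul ustar.continuous
  refine ⟨η, fun t => ∫ s in Ioi t, fu ustar s, hηc, ?_, ?_, ‖ustar‖, ?_⟩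
  · intro t
    rw [hηrep]
    exact gjs_hasDerivAt_J (hfuc ustar) (hint1 ustar) (hint2 ustar) t
  · intro t
    have h1 := gjs_hasDerivAt_P (hfuc ustar) (hint1 ustar) t
    have h2 : fu ustar t = g t + K t * η t := hηψ t
    rw [← h2]
    exact h1
  · intro t ht
    have h1 : |η t| = Real.exp (-(φ t)) * |ustar t| := by
      rw [hη]; dsimp only; rw [abs_mul, abs_of_pos (Real.exp_pos _)]
    have h2 : |ustar t| ≤ ‖ustar‖ := by
      simpa [Real.norm_eq_abs] using ustar.norm_coe_le_norm t
    have h3 : Real.exp (-(φ t)) ≤ Real.exp (-t) := Real.exp_le_exp.2 (neg_le_neg (R3 t ht))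
    rw [h1]
    calc Real.exp (-(φ t)) * |ustar t| ≤ Real.exp (-t) * ‖ustar‖ :=
        mul_le_mul h3 h2 (abs_nonneg _) (Real.exp_pos _).le
      _ = ‖ustar‖ * Real.exp (-t) := by ring

set_option maxHeartbeats 1000000 in
/-- Jost-solution construction: for `W(t) = 2/t² - 3Q(t)²` with `3Q² ≤ e^{-2t}` for
large `t`, there is a solution `Θ₁ = t² + η₁(t)` of `Θ₁'' = W Θ₁` on `[1,∞)` with
`η₁ = O(e^{-t})`. -/
theorem growing_jost_solution (Q : ℝ → ℝ) (hQc : ContinuousOn Q (Ici 1))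
    (hQ : ∃ T ≥ (1:ℝ), ∀ t ≥ T, 3 * Q t ^ 2 ≤ Real.exp (-2 * t)) :
    ∃ Θ₁ η₁ : ℝ → ℝ, ContDiffOn ℝ 2 Θ₁ (Ici 1) ∧
      (∀ t ≥ (1:ℝ), deriv (deriv Θ₁) t = (2 / t ^ 2 - 3 * Q t ^ 2) * Θ₁ t) ∧
      (∀ t ≥ (1:ℝ), Θ₁ t = t ^ 2 + η₁ t) ∧
      ∃ M : ℝ, ∀ t ≥ (1:ℝ), |Real.exp t * η₁ t| ≤ M := by
  obtain ⟨T, hT1, hTt⟩ := hQ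
  set T' : ℝ := T + 130 with hT'def
  have hT'131 : (131:ℝ) ≤ T' := by linarith
  have hT'0 : (0:ℝ) < T' := by linarith
  set Qt : ℝ → ℝ := fun t => Q (max t 1) with hQtdef
  have hQtc : Continuous Qt := by
    apply hQc.comp_continuous (continuous_id.max continuous_const)
    intro x
    exact le_max_right x 1
  have hQteq : ∀ t, 1 ≤ t → Qt t = Q t := by
    intro t ht
    rw [hQtdef]
    simp [max_eq_left ht]
  set Kf : ℝ → ℝ := fun s => 2/(max s 1)^2 - 3 * Qt s^2 with hKdef
  set g : ℝ → ℝ := fun s => -(3 * Qt s^2) * (max s 1)^2 with hgdef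
  have hmax1 : ∀ s : ℝ, (1:ℝ) ≤ max s 1 := fun s => le_max_right s 1
  have hmaxpos : ∀ s : ℝ, (0:ℝ) < max s 1 := fun s => lt_of_lt_of_le one_pos (hmax1 s)
  have hKc : Continuous Kf := by
    apply Continuous.sub
    · exact Continuous.div continuous_const ((continuous_id.max continuous_const).pow 2)
        (fun s => by positivity)
    · exact continuous_const.mul (hQtc.pow 2)
  have hgc : Continuous g :=
    (continuous_const.mul (hQtc.pow 2)).neg.mul ((continuous_id.max continuous_const).pow 2)
  obtain ⟨C₀, hC₀⟩ := (isCompact_Icc (a := (1:ℝ)) (b := T')).exists_bound_of_continuousOn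
    ((continuousOn_const (c := (3:ℝ))).mul ((hQc.mono Icc_subset_Ici_self).pow 2))
  set BQ : ℝ := |C₀| + 1 with hBQdef
  have hBQ1 : (1:ℝ) ≤ BQ := by
    have := abs_nonneg C₀
    rw [hBQdef]
    linarith
  have hQtnn : ∀ s : ℝ, 0 ≤ 3 * Qt s^2 := fun s => by positivity
  have hQtail : ∀ s : ℝ, T' ≤ s → 3 * Qt s^2 ≤ Real.exp (-(2*s)) := by
    intro s hs
    have hs1 : (1:ℝ) ≤ s := by linarith
    rw [hQtdef]
    simp only [max_eq_left hs1]
    have := hTt s (by linarith)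
    rw [show -(2*s) = -2*s by ring]
    exact this
  have hBQ : ∀ s : ℝ, 3 * Qt s^2 ≤ BQ := by
    intro s
    rcases le_total s T' with hs | hs
    · have hmem : max s 1 ∈ Icc 1 T' := ⟨hmax1 s, max_le (by linarith) (by linarith)⟩
      have h1 := hC₀ _ hmem
      rw [Real.norm_eq_abs] at h1
      simp only [Pi.mul_apply, Pi.pow_apply] at h1
      have h2 : 3 * Qt s^2 ≤ |3 * Q (max s 1)^2| := by
        rw [hQtdef]
        exact le_abs_self _
      have h3 : C₀ ≤ |C₀| := le_abs_self _
      rw [hBQdef]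
      linarith
    · have h1 := hQtail s hs
      have h2 : Real.exp (-(2*s)) ≤ 1 := Real.exp_le_one_iff.2 (by linarith)
      linarith
  set B : ℝ := 2 + BQ with hBdef
  have hB0 : (0:ℝ) ≤ B := by rw [hBdef]; linarith
  have hKb : ∀ s : ℝ, |Kf s| ≤ B := by
    intro s
    have h2 : (1:ℝ) ≤ (max s 1)^2 := by nlinarith [hmax1 s]
    have h3 : 2/(max s 1)^2 ≤ 2 := by
      rw [div_le_iff₀ (by linarith)]
      nlinarith
    have h4 : (0:ℝ) ≤ 2/(max s 1)^2 := by positivity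
    have h5 := abs_sub (2/(max s 1)^2) (3 * Qt s^2)
    rw [abs_of_nonneg h4, abs_of_nonneg (hQtnn s)] at h5
    rw [hKdef, hBdef]
    have h6 := hBQ s
    calc |2/(max s 1)^2 - 3 * Qt s^2| ≤ 2/(max s 1)^2 + 3 * Qt s^2 := h5
      _ ≤ 2 + BQ := add_le_add h3 h6
  set ε : ℝ := 2/T'^2 + Real.exp (-(2*T')) with hεdef
  have hε0 : (0:ℝ) ≤ ε := by
    rw [hεdef]
    have := (Real.exp_pos (-(2*T'))).le
    have : (0:ℝ) ≤ 2/T'^2 := by positivity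
    linarith [(Real.exp_pos (-(2*T'))).le]
  have hKt : ∀ s : ℝ, T' ≤ s → |Kf s| ≤ ε := by
    intro s hs
    have hs1 : (1:ℝ) ≤ s := by linarith
    have hmx : max s 1 = s := max_eq_left hs1
    have h1 : 2/s^2 ≤ 2/T'^2 := by
      rw [div_le_div_iff₀ (by nlinarith) (by nlinarith)]
      nlinarith
    have h2 := hQtail s hs
    have h3 : Real.exp (-(2*s)) ≤ Real.exp (-(2*T')) := Real.exp_le_exp.2 (by linarith)
    have h4 : (0:ℝ) ≤ 2/s^2 := by positivity
    have h5 := abs_sub (2/s^2) (3 * Qt s^2)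
    rw [abs_of_nonneg h4, abs_of_nonneg (hQtnn s)] at h5
    rw [hKdef]
    simp only [hmx]
    rw [hεdef]
    calc |2/s^2 - 3 * Qt s^2| ≤ 2/s^2 + 3 * Qt s^2 := h5
      _ ≤ 2/T'^2 + Real.exp (-(2*T')) := add_le_add h1 (h2.trans h3)
  set G : ℝ := BQ * T'^2 * Real.exp (3/2*T') + 1 with hGdef
  have hG0 : (0:ℝ) ≤ G := by
    rw [hGdef]
    have h1 : (0:ℝ) ≤ BQ * T'^2 * Real.exp (3/2*T') :=
      mul_nonneg (mul_nonneg (by linarith) (sq_nonneg T')) (Real.exp_pos _).le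
    linarith
  have hG1 : (1:ℝ) ≤ G := by
    rw [hGdef]
    have h1 : (0:ℝ) ≤ BQ * T'^2 * Real.exp (3/2*T') :=
      mul_nonneg (mul_nonneg (by linarith) (sq_nonneg T')) (Real.exp_pos _).le
    linarith
  have hsq : ∀ s : ℝ, 128 ≤ s → s^2 ≤ Real.exp (s/2) := by
    intro s hs
    have h1 := Real.add_one_le_exp (s/8)
    have h2 : Real.exp (s/2) = Real.exp (s/8)^4 := by
      rw [show s/2 = (4:ℕ)*(s/8) by push_cast; ring, Real.exp_nat_mul]
    have h4 : (s/8)^4 ≤ Real.exp (s/8)^4 :=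
      pow_le_pow_left₀ (by linarith) (by linarith) 4
    have h5 : (s/8)^4 = s^4/4096 := by ring
    have hs0 : (0:ℝ) ≤ s := by linarith
    have h6 : (4096:ℝ) ≤ s^2 := by nlinarith
    have h7 : 4096*s^2 ≤ s^4 := by nlinarith [sq_nonneg s]
    rw [h2]
    linarith
  have hgb : ∀ s : ℝ, |g s| ≤ G * Real.exp (-(3/2*s)) := by
    intro s
    have habs : |g s| = 3 * Qt s^2 * (max s 1)^2 := by
      rw [hgdef]
      simp only
      rw [abs_mul, abs_neg, abs_of_nonneg (hQtnn s),
        abs_of_nonneg (by positivity : (0:ℝ) ≤ (max s 1)^2)]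
    rw [habs]
    rcases le_total s T' with hs | hs
    · have h1 : (max s 1)^2 ≤ T'^2 := by
        have hm : max s 1 ≤ T' := max_le (by linarith) (by linarith)
        nlinarith [hmax1 s]
      have h2 : 3 * Qt s^2 * (max s 1)^2 ≤ BQ * T'^2 :=
        mul_le_mul (hBQ s) h1 (by positivity) (by linarith)
      have h3 : (1:ℝ) ≤ Real.exp (3/2*T') * Real.exp (-(3/2*s)) := by
        rw [← Real.exp_add]
        exact Real.one_le_exp (by linarith)
      have h4 : (0:ℝ) ≤ BQ * T'^2 := mul_nonneg (by linarith) (sq_nonneg T')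
      calc 3 * Qt s^2 * (max s 1)^2 ≤ BQ * T'^2 := h2
        _ = BQ * T'^2 * 1 := by ring
        _ ≤ BQ * T'^2 * (Real.exp (3/2*T') * Real.exp (-(3/2*s))) :=
            mul_le_mul_of_nonneg_left h3 h4
        _ = (BQ * T'^2 * Real.exp (3/2*T')) * Real.exp (-(3/2*s)) := by ring
        _ ≤ G * Real.exp (-(3/2*s)) :=
            mul_le_mul_of_nonneg_right (by rw [hGdef]; linarith) (Real.exp_pos _).le
    · have hs1 : (1:ℝ) ≤ s := by linarith
      have hmx : max s 1 = s := max_eq_left hs1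
      rw [hmx]
      have h1 := hQtail s hs
      calc 3 * Qt s^2 * s^2 ≤ Real.exp (-(2*s)) * s^2 :=
            mul_le_mul_of_nonneg_right h1 (by positivity)
        _ ≤ Real.exp (-(2*s)) * Real.exp (s/2) :=
            mul_le_mul_of_nonneg_left (hsq s (by linarith)) (Real.exp_pos _).le
        _ = Real.exp (-(3/2*s)) := by rw [← Real.exp_add]; congr 1; ring
        _ ≤ G * Real.exp (-(3/2*s)) := le_mul_of_one_le_left (Real.exp_pos _).le hG1
  set μ : ℝ := Real.sqrt (16*(B+1)) with hμdef
  have hμsq : μ^2 = 16*(B+1) := Real.sq_sqrt (by linarith)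
  have hμ32 : 3/2 ≤ μ := by
    nlinarith [Real.sqrt_nonneg (16*(B+1)), hμsq]
  have hsmall : 2*B/μ^2 + (8/9)*ε ≤ 1/2 := by
    rw [hμsq]
    have h1 : 2*B/(16*(B+1)) ≤ 1/8 := by
      rw [div_le_iff₀ (by linarith)]
      linarith
    have e1 : 2/T'^2 ≤ 2/17161 := by
      rw [div_le_div_iff₀ (by nlinarith) (by norm_num)]
      nlinarith
    have e2 : Real.exp (-(2*T')) ≤ 1/4 := by
      have h3 : Real.exp (-(2*T')) ≤ Real.exp (-2) := Real.exp_le_exp.2 (by linarith)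
      have h4 : (4:ℝ) ≤ Real.exp 2 := by
        have h5 := Real.add_one_le_exp 1
        have h6 : Real.exp 2 = Real.exp 1 * Real.exp 1 := by
          rw [← Real.exp_add]; norm_num
        nlinarith
      have h9 : Real.exp (-2) * Real.exp 2 = 1 := by
        rw [← Real.exp_add]; norm_num
      have h10 := mul_le_mul_of_nonneg_left h4 (Real.exp_pos (-2)).le
      linarith
    have h8 : ε ≤ 2/17161 + 1/4 := by rw [hεdef]; linarith
    linarith
  obtain ⟨η, P, hηc, hη', hP', M, hM⟩ := gjs_main g Kf hgc hKc T' G B ε μ (by linarith)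
    hG0 hB0 hε0 hμ32 hgb hKb hKt hsmall
  set Θ : ℝ → ℝ := fun t => t^2 + η t with hΘdef
  have hΘ' : ∀ t : ℝ, HasDerivAt Θ (2*t - P t) t := by
    intro t
    have h1 : HasDerivAt (fun t : ℝ => t^2) (2*t) t := by
      simpa using hasDerivAt_pow 2 t
    have h2 := h1.add (hη' t)
    rw [hΘdef]
    exact h2.congr_deriv (by ring)
  have hdΘ : deriv Θ = fun t => 2*t - P t := funext fun t => (hΘ' t).deriv
  have hΘ'' : ∀ t : ℝ, HasDerivAt (fun t => 2*t - P t) (2 + (g t + Kf t * η t)) t := by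
    intro t
    have h1 : HasDerivAt (fun t : ℝ => 2*t) 2 t := by
      simpa using (hasDerivAt_id t).const_mul 2
    have h2 := h1.sub (hP' t)
    exact h2.congr_deriv (by ring)
  have hdd : ∀ t : ℝ, deriv (deriv Θ) t = 2 + (g t + Kf t * η t) := by
    intro t
    rw [hdΘ]
    exact (hΘ'' t).deriv
  have hCD : ContDiff ℝ 2 Θ := by
    rw [show (2 : WithTop ℕ∞) = 1 + 1 by norm_num, contDiff_succ_iff_deriv]
    refine ⟨fun t => (hΘ' t).differentiableAt, by simp, ?_⟩
    rw [hdΘ, contDiff_one_iff_deriv]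
    constructor
    · exact fun t => (hΘ'' t).differentiableAt
    · have : deriv (fun t => 2*t - P t) = fun t => 2 + (g t + Kf t * η t) :=
        funext fun t => (hΘ'' t).deriv
      rw [this]
      exact continuous_const.add (hgc.add (hKc.mul hηc))
  refine ⟨Θ, η, hCD.contDiffOn, ?_, fun t _ => rfl, M, ?_⟩
  · intro t ht
    rw [hdd t]
    have ht0 : t ≠ 0 := by linarith
    have hmx : max t 1 = t := max_eq_left ht
    have hQe := hQteq t ht
    have hg1 : g t = -(3 * Q t^2) * t^2 := by
      rw [hgdef]
      simp only
      rw [hmx, hQe]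
    have hK1 : Kf t = 2/t^2 - 3 * Q t^2 := by
      rw [hKdef]
      simp only
      rw [hmx, hQe]
    rw [hg1, hK1, hΘdef]
    simp only
    field_simp
    ring
  · intro t ht
    rw [abs_mul, abs_of_pos (Real.exp_pos t)]
    calc Real.exp t * |η t| ≤ Real.exp t * (M * Real.exp (-t)) :=
        mul_le_mul_of_nonneg_left (hM t ht) (Real.exp_pos t).le
      _ = M * (Real.exp t * Real.exp (-t)) := by ring
      _ = M := by rw [← Real.exp_add]; simp
end

section
/- Let Q be the ground state, V(t) = ε − 3Q(t)² with ε ∈ [0,1], and suppose G_ε solves G_ε'' = (ε − 3Q²) G_ε with G_ε(0) = 0, G_ε'(0) = 1, and G_ε(t) > 0 for all t > 0. Let G solve G'' = (1 + ε₀ − 3Q²) G with G(0) = 0, G'(0) = 1, where ε₀ > 0, and suppose G > 0 on (0,∞) and G(t) ≤ C e^{−√(1+ε₀) t} for large t. Then 0 < G_ε(t) ≤ G(t) for all t > 0, hence G_ε(t) ≤ C e^{−√(1+ε₀) t} for large t. -/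
/-!
Both functions vanish at `0` with slope `1`, so `Gε / G → 1` as `t → 0⁺`. Since the potential
of `Gε` lies below that of `G` and both functions are positive, the Wronskian
`W = Gε' G - Gε G'` starts at `0` and has derivative `(ε - 1 - ε₀) Gε G ≤ 0`. Hence
`(Gε / G)' = W / G² ≤ 0`, so `Gε / G ≤ 1` and the decay of `G` passes to `Gε`.
-/

open Set Filter Topology

lemma ContDiffOn.hasDerivAt_deriv_and_deriv_deriv {f : ℝ → ℝ} {s : Set ℝ} {t : ℝ}
    (hf : ContDiffOn ℝ 2 f s) (ht : s ∈ 𝓝 t) :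
    HasDerivAt f (deriv f t) t ∧ HasDerivAt (deriv f) (deriv (deriv f) t) t := by
  have ht' : t ∈ interior s := mem_interior_iff_mem_nhds.2 ht
  have hf' : ContDiffOn ℝ 2 f (interior s) := hf.mono interior_subset
  refine ⟨((hf.differentiableOn (by norm_num)).differentiableAt ht).hasDerivAt, ?_⟩
  have hd : ContDiffOn ℝ 1 (deriv f) (interior s) :=
    hf'.deriv_of_isOpen isOpen_interior (by norm_num)
  exact ((hd.differentiableOn (by norm_num)).differentiableAt
    (isOpen_interior.mem_nhds ht')).hasDerivAt

/-- A l'Hôpital rule that needs the derivatives at `a` only. -/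
lemma tendsto_div_nhdsNE_of_hasDerivAt {u v : ℝ → ℝ} {a u' v' : ℝ}
    (hu : HasDerivAt u u' a) (hv : HasDerivAt v v' a) (hua : u a = 0) (hva : v a = 0)
    (hv' : v' ≠ 0) : Tendsto (fun s => u s / v s) (𝓝[≠] a) (𝓝 (u' / v')) := by
  refine ((hasDerivAt_iff_tendsto_slope.1 hu).div (hasDerivAt_iff_tendsto_slope.1 hv) hv').congr'
    (Eventually.of_forall fun s => ?_)
  rcases eq_or_ne s a with rfl | hs
  · simp [hua, hva]
  · simp only [Pi.div_apply, slope_def_field, hua, hva, sub_zero]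
    exact div_div_div_cancel_right₀ (sub_ne_zero.2 hs) _ _

section SturmComparison

variable {u v p q : ℝ → ℝ} {a : ℝ}

lemma hasDerivAt_wronskian_of_deriv_deriv_eq (hu : ContDiffOn ℝ 2 u (Ici a))
    (hv : ContDiffOn ℝ 2 v (Ici a))
    (hu'' : ∀ t > a, deriv (deriv u) t = p t * u t) (hv'' : ∀ t > a, deriv (deriv v) t = q t * v t)
    {t : ℝ} (ht : a < t) :
    HasDerivAt (fun s => deriv u s * v s - u s * deriv v s) ((p t - q t) * (u t * v t)) t := by
  obtain ⟨hu₁, hu₂⟩ := hu.hasDerivAt_deriv_and_deriv_deriv (Ici_mem_nhds ht)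
  obtain ⟨hv₁, hv₂⟩ := hv.hasDerivAt_deriv_and_deriv_deriv (Ici_mem_nhds ht)
  refine ((hu₂.mul hv₁).sub (hu₁.mul hv₂)).congr_deriv ?_
  rw [hu'' t ht, hv'' t ht]
  ring

/-- The Wronskian vanishes at `a` and is nonincreasing, since `u'' / u = p ≤ q = v'' / v`. -/
lemma wronskian_nonpos_of_deriv_deriv_eq (hu : ContDiffOn ℝ 2 u (Ici a))
    (hv : ContDiffOn ℝ 2 v (Ici a))
    (hu'' : ∀ t > a, deriv (deriv u) t = p t * u t) (hv'' : ∀ t > a, deriv (deriv v) t = q t * v t)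
    (hpq : ∀ t > a, p t ≤ q t) (hua : u a = 0) (hva : v a = 0)
    (hu_nonneg : ∀ t > a, 0 ≤ u t) (hv_nonneg : ∀ t > a, 0 ≤ v t) :
    ∀ t > a, deriv u t * v t - u t * deriv v t ≤ 0 := by
  set W : ℝ → ℝ := fun s => derivWithin u (Ici a) s * v s - u s * derivWithin v (Ici a) s
  have hW_eq : ∀ t > a, W t = deriv u t * v t - u t * deriv v t := fun t ht => by
    simp only [W, derivWithin_of_mem_nhds (Ici_mem_nhds ht)]
  have hW_cont : ContinuousOn W (Ici a) :=
    ((hu.continuousOn_derivWithin (uniqueDiffOn_Ici a) (by norm_num)).mul hv.continuousOn).sub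
      (hu.continuousOn.mul (hv.continuousOn_derivWithin (uniqueDiffOn_Ici a) (by norm_num)))
  have hW_anti : AntitoneOn W (Ici a) := by
    refine antitoneOn_of_hasDerivWithinAt_nonpos (convex_Ici a) hW_cont
      (f' := fun t => (p t - q t) * (u t * v t)) (fun t ht => ?_) (fun t ht => ?_)
    all_goals rw [interior_Ici] at ht
    · refine ((hasDerivAt_wronskian_of_deriv_deriv_eq hu hv hu'' hv'' ht).congr_of_eventuallyEq
        ?_).hasDerivWithinAt
      filter_upwards [Ioi_mem_nhds ht] with s hs using hW_eq s hs
    · exact mul_nonpos_of_nonpos_of_nonneg (sub_nonpos.2 (hpq t ht))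
        (mul_nonneg (hu_nonneg t ht) (hv_nonneg t ht))
  intro t ht
  rw [← hW_eq t ht]
  calc W t ≤ W a := hW_anti self_mem_Ici (mem_Ici.2 ht.le) ht.le
    _ = 0 := by simp [W, hua, hva]

/-- **Sturm comparison theorem**. -/
theorem div_le_div_of_sturm_comparison (hu : ContDiffOn ℝ 2 u (Ici a))
    (hv : ContDiffOn ℝ 2 v (Ici a))
    (hu'' : ∀ t > a, deriv (deriv u) t = p t * u t) (hv'' : ∀ t > a, deriv (deriv v) t = q t * v t)
    (hpq : ∀ t > a, p t ≤ q t) (hua : u a = 0) (hva : v a = 0) {u' v' : ℝ}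
    (hu' : HasDerivAt u u' a) (hv' : HasDerivAt v v' a) (hv'_ne : v' ≠ 0)
    (hu_nonneg : ∀ t > a, 0 ≤ u t) (hv_pos : ∀ t > a, 0 < v t) :
    ∀ t > a, u t / v t ≤ u' / v' := by
  have hW := wronskian_nonpos_of_deriv_deriv_eq hu hv hu'' hv'' hpq hua hva hu_nonneg
    (fun t ht => (hv_pos t ht).le)
  have h_deriv : ∀ t > a, HasDerivAt (fun s => u s / v s)
      ((deriv u t * v t - u t * deriv v t) / v t ^ 2) t := fun t ht =>
    (hu.hasDerivAt_deriv_and_deriv_deriv (Ici_mem_nhds ht)).1.div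
      (hv.hasDerivAt_deriv_and_deriv_deriv (Ici_mem_nhds ht)).1 (hv_pos t ht).ne'
  have h_anti : AntitoneOn (fun s => u s / v s) (Ioi a) := by
    refine antitoneOn_of_hasDerivWithinAt_nonpos (convex_Ioi a)
      (f' := fun t => (deriv u t * v t - u t * deriv v t) / v t ^ 2)
      (fun t ht => (h_deriv t ht).continuousAt.continuousWithinAt) (fun t ht => ?_)
      (fun t ht => ?_)
    all_goals rw [interior_Ioi] at ht
    · exact (h_deriv t ht).hasDerivWithinAt
    · exact div_nonpos_of_nonpos_of_nonneg (hW t ht) (sq_nonneg _)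
  have h_lim : Tendsto (fun s => u s / v s) (𝓝[>] a) (𝓝 (u' / v')) :=
    (tendsto_div_nhdsNE_of_hasDerivAt hu' hv' hua hva hv'_ne).mono_left
      (nhdsWithin_mono _ fun _ hs => ne_of_gt hs)
  intro t ht
  refine ge_of_tendsto h_lim ?_
  filter_upwards [Ioo_mem_nhdsGT ht] with s hs
  exact h_anti hs.1 ht hs.2.le

end SturmComparison

theorem comparison_with_eigenfunction_general (Q : ℝ → ℝ)
    (ε ε₀ : ℝ) (hε : ε ∈ Icc (0:ℝ) 1) (hε₀ : 0 < ε₀)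
    (Gε G : ℝ → ℝ)
    (hGε : ContDiffOn ℝ 2 Gε (Ici 0)) (hG : ContDiffOn ℝ 2 G (Ici 0))
    (hGεode : ∀ t > (0:ℝ), deriv (deriv Gε) t = (ε - 3 * Q t ^ 2) * Gε t)
    (hGode : ∀ t > (0:ℝ), deriv (deriv G) t = (1 + ε₀ - 3 * Q t ^ 2) * G t)
    (hGε0 : Gε 0 = 0) (hGε0' : deriv Gε 0 = 1)
    (hG0 : G 0 = 0) (hG0' : deriv G 0 = 1)
    (hGεpos : ∀ t > (0:ℝ), 0 < Gε t)
    (hGpos : ∀ t > (0:ℝ), 0 < G t)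
    (hGdecay : ∃ C > (0:ℝ), ∃ T : ℝ, ∀ t ≥ T,
      G t ≤ C * Real.exp (-Real.sqrt (1 + ε₀) * t)) :
    (∀ t > (0:ℝ), 0 < Gε t ∧ Gε t ≤ G t) ∧
      ∃ C > (0:ℝ), ∃ T : ℝ, ∀ t ≥ T,
        Gε t ≤ C * Real.exp (-Real.sqrt (1 + ε₀) * t) := by
  have hslope {f : ℝ → ℝ} (hf : deriv f 0 = 1) : HasDerivAt f 1 0 :=
    hf ▸ (differentiableAt_of_deriv_ne_zero (hf ▸ one_ne_zero)).hasDerivAt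
  have hle : ∀ t > (0:ℝ), Gε t ≤ G t := fun t ht => by
    have h := div_le_div_of_sturm_comparison (p := fun t => ε - 3 * Q t ^ 2)
      (q := fun t => 1 + ε₀ - 3 * Q t ^ 2) hGε hG hGεode hGode (fun _ _ => by linarith [hε.2])
      hGε0 hG0 (hslope hGε0') (hslope hG0') one_ne_zero (fun t ht => (hGεpos t ht).le) hGpos t ht
    rwa [div_one, div_le_one (hGpos t ht)] at h
  obtain ⟨C, hC, T, hT⟩ := hGdecay
  refine ⟨fun t ht => ⟨hGεpos t ht, hle t ht⟩, C, hC, max T 1, fun t ht => ?_⟩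
  exact (hle t (one_pos.trans_le ((le_max_right T 1).trans ht))).trans
    (hT t ((le_max_left T 1).trans ht))

/-- Comparison of the `l = 0` solution with the decaying negative-eigenvalue
eigenfunction: `0 < G_ε ≤ G`, hence `G_ε` inherits the exponential decay of `G`. -/
theorem comparison_with_eigenfunction (Q : ℝ → ℝ) (hQc : Continuous Q)
    (ε ε₀ : ℝ) (hε : ε ∈ Icc (0:ℝ) 1) (hε₀ : 0 < ε₀)
    (Gε G : ℝ → ℝ)
    (hGε : ContDiffOn ℝ 2 Gε (Ici 0)) (hG : ContDiffOn ℝ 2 G (Ici 0))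
    (hGεode : ∀ t > (0:ℝ), deriv (deriv Gε) t = (ε - 3 * Q t ^ 2) * Gε t)
    (hGode : ∀ t > (0:ℝ), deriv (deriv G) t = (1 + ε₀ - 3 * Q t ^ 2) * G t)
    (hGε0 : Gε 0 = 0) (hGε0' : deriv Gε 0 = 1)
    (hG0 : G 0 = 0) (hG0' : deriv G 0 = 1)
    (hGεpos : ∀ t > (0:ℝ), 0 < Gε t)
    (hGpos : ∀ t > (0:ℝ), 0 < G t)
    (hGdecay : ∃ C > (0:ℝ), ∃ T : ℝ, ∀ t ≥ T,
      G t ≤ C * Real.exp (-Real.sqrt (1 + ε₀) * t)) :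
    (∀ t > (0:ℝ), 0 < Gε t ∧ Gε t ≤ G t) ∧
      ∃ C > (0:ℝ), ∃ T : ℝ, ∀ t ≥ T,
        Gε t ≤ C * Real.exp (-Real.sqrt (1 + ε₀) * t) :=
  comparison_with_eigenfunction_general Q ε ε₀ hε hε₀ Gε G hGε hG hGεode hGode hGε0 hGε0' hG0 hG0'
    hGεpos hGpos hGdecay
end
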